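/- arXiv:1803.10697 — 2 statements merged into one kernel-verified Lean document; each statement's English description precedes it below -/
import Mathlib

section
/- Let ε₀ > 0 and suppose the uniform large deviation estimate holds with parameters (ε₀, η₀, N₀). Let 0 < δ₀ < η₀. Then for ℙ-almost every ω there exists N₁ = N₁(ω) such that for every n > N₁: max{ Leb(B⁻_{[n+1,3n+1],ε₀,ω} ∩ σ), Leb(B⁻_{[−n,n],ε₀,ω} ∩ σ) } ≤ e^{−(η₀−δ₀)(2n+1)}, where Leb denotes Lebesgue measure on ℝ. -/
open MeasureTheory Filter Real Set Topology Pointwise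

noncomputable section

namespace Anderson

/-- One-step transfer matrix `A(v) = [[E - v, -1], [1, 0]]`. -/
def Amat (E v : ℝ) : Matrix (Fin 2) (Fin 2) ℝ := !![E - v, -1; 1, 0]

/-- Transfer matrix `T_{[a,b],E,ω} = A(ω_b) ⋯ A(ω_a)` (for `a ≤ b`). -/
def Tmat (E : ℝ) (ω : ℤ → ℝ) (a b : ℤ) : Matrix (Fin 2) (Fin 2) ℝ :=
  ((List.range ((b - a).toNat + 1)).map (fun i => Amat E (ω (b - (i : ℤ))))).prod

/-- (Frobenius) norm of a 2×2 matrix. -/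
def matNorm (M : Matrix (Fin 2) (Fin 2) ℝ) : ℝ := Real.sqrt (∑ i, ∑ j, (M i j) ^ 2)

/-- The restriction `H_{[a,b],ω}` of the Anderson Hamiltonian to the box `[a,b]`,
a `(b-a+1) × (b-a+1)` tridiagonal matrix. -/
def HBox (ω : ℤ → ℝ) (a b : ℤ) :
    Matrix (Fin ((b - a).toNat + 1)) (Fin ((b - a).toNat + 1)) ℝ :=
  Matrix.of fun i j =>
    if (i : ℕ) = (j : ℕ) then ω (a + (i : ℕ))
    else if (i : ℕ) = (j : ℕ) + 1 ∨ (j : ℕ) = (i : ℕ) + 1 then 1 else 0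

/-- `H_{[a,b],ω} - E`, as a matrix. -/
def HBoxE (E : ℝ) (ω : ℤ → ℝ) (a b : ℤ) :
    Matrix (Fin ((b - a).toNat + 1)) (Fin ((b - a).toNat + 1)) ℝ :=
  HBox ω a b - E • (1 : Matrix (Fin ((b - a).toNat + 1)) (Fin ((b - a).toNat + 1)) ℝ)

/-- `P_{[a,b],E,ω} = det (H_{[a,b],ω} - E)`; equal to `1` when `a > b`. -/
def Pdet (E : ℝ) (ω : ℤ → ℝ) (a b : ℤ) : ℝ :=
  if a ≤ b then (HBoxE E ω a b).det else 1

/-- `E` is an eigenvalue of `H_{[a,b],ω}`. -/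
def IsEVBox (E : ℝ) (ω : ℤ → ℝ) (a b : ℤ) : Prop := (HBoxE E ω a b).det = 0

/-- Index of a site `x ∈ [a,b] ∩ ℤ` inside the box `[a,b]`. -/
def idx (a b x : ℤ) : Fin ((b - a).toNat + 1) :=
  ⟨(x - a).toNat % ((b - a).toNat + 1), Nat.mod_lt _ (Nat.succ_pos _)⟩

/-- Green's function `G_{[a,b],E,ω}(x,y) = (H_{[a,b],ω} - E)⁻¹(x,y)`. -/
def Green (E : ℝ) (ω : ℤ → ℝ) (a b x y : ℤ) : ℝ :=
  (HBoxE E ω a b)⁻¹ (idx a b x) (idx a b y)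

/-- The site `x` is `(c, n, E, ω)`-regular. -/
def IsRegularSite (c : ℝ) (n : ℕ) (E : ℝ) (ω : ℤ → ℝ) (x : ℤ) : Prop :=
  ¬ IsEVBox E ω (x - n) (x + n) ∧
    |Green E ω (x - n) (x + n) x (x - n)| ≤ Real.exp (-c * n) ∧
    |Green E ω (x - n) (x + n) x (x + n)| ≤ Real.exp (-c * n)

/-- `Ψ` is a nonzero, polynomially bounded generalized eigenfunction of `H_ω`
for the energy `E`. -/
def IsGenEF (ω : ℤ → ℝ) (E : ℝ) (Ψ : ℤ → ℝ) : Prop :=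
  Ψ ≠ 0 ∧ (∃ C : ℝ, ∃ k : ℕ, ∀ n : ℤ, |Ψ n| ≤ C * (1 + |(n : ℝ)|) ^ k) ∧
    ∀ n : ℤ, Ψ (n + 1) + Ψ (n - 1) + ω n * Ψ n = E * Ψ n

/-- `E` is a generalized eigenvalue of `H_ω`. -/
def IsGenEV (ω : ℤ → ℝ) (E : ℝ) : Prop := ∃ Ψ, IsGenEF ω E Ψ

end Anderson

/-! For every energy `E ∈ σ`, the large deviation estimate bounds by `e^{-ηL}` the probability of
`{ω : |P_{[a,b],E,ω}| ≤ e^{(γ(E) - ε)L}, P_{[a,b],E,ω} ≠ 0}`; the zeros of `P` have to be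
excluded because `Real.log 0 = 0`, and they form a product-null set since for fixed `ω` they are
the finitely many roots of a characteristic polynomial in `E`. Tonelli on `σ × Ω` (legitimate since
`γ`, a pointwise limit of integrals of jointly continuous functions, is measurable) bounds the
product measure of the lower deviation set by `|σ| e^{-ηL}`, and Markov's inequality in `ω` gives
`ℙ(|B⁻_ω ∩ σ| > e^{-(η-δ)L}) ≤ |σ| e^{-δL}`. This is summable over `L = 2n + 1`, so
Borel–Cantelli concludes. -/

open scoped ENNReal

section FubiniMarkov

variable {α β : Type*} [MeasurableSpace α] [MeasurableSpace β]
  {ν : Measure α} {ℙ : Measure β}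

theorem measure_prod_le_of_ae_measure_preimage_prodMk_le [SFinite ℙ] {D : Set (α × β)}
    (hD : MeasurableSet D) {p : ℝ≥0∞} (hp : ∀ᵐ x ∂ν, ℙ (Prod.mk x ⁻¹' D) ≤ p) :
    ν.prod ℙ D ≤ ν univ * p := by
  calc ν.prod ℙ D = ∫⁻ x, ℙ (Prod.mk x ⁻¹' D) ∂ν := Measure.prod_apply hD
    _ ≤ ∫⁻ _, p ∂ν := lintegral_mono_ae hp
    _ = ν univ * p := by rw [lintegral_const, mul_comm]

theorem measure_prod_eq_zero_of_forall_measure_preimage_eq_zero [SFinite ν] [SFinite ℙ]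
    {Z : Set (α × β)} (hZ : MeasurableSet Z) (hZ_null : ∀ y, ν ((·, y) ⁻¹' Z) = 0) :
    ν.prod ℙ Z = 0 := by
  simp [Measure.prod_apply_symm hZ, hZ_null]

theorem mul_measure_setOf_le_measure_preimage_le_measure_prod [SFinite ν] [SFinite ℙ]
    {D : Set (α × β)} (hD : MeasurableSet D) (r : ℝ≥0∞) :
    r * ℙ {y | r ≤ ν ((·, y) ⁻¹' D)} ≤ ν.prod ℙ D := by
  rw [Measure.prod_apply_symm hD]
  exact mul_meas_ge_le_lintegral (measurable_measure_prodMk_right hD) r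

theorem mul_measure_setOf_lt_measure_preimage_le [SFinite ν] [SFinite ℙ] {D Z : Set (α × β)}
    (hD : MeasurableSet D) (hZ : MeasurableSet Z) (hZ_null : ∀ y, ν ((·, y) ⁻¹' Z) = 0)
    {p : ℝ≥0∞} (hp : ∀ᵐ x ∂ν, ℙ (Prod.mk x ⁻¹' (D \ Z)) ≤ p) (r : ℝ≥0∞) :
    r * ℙ {y | r < ν ((·, y) ⁻¹' D)} ≤ ν univ * p :=
  calc r * ℙ {y | r < ν ((·, y) ⁻¹' D)}
      ≤ r * ℙ {y | r ≤ ν ((·, y) ⁻¹' D)} :=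
        mul_le_mul_right (measure_mono fun _ (hy : r < _) => hy.le) r
    _ ≤ ν.prod ℙ D := mul_measure_setOf_le_measure_preimage_le_measure_prod hD r
    _ = ν.prod ℙ (D \ Z) :=
      (measure_sdiff_null
        (measure_prod_eq_zero_of_forall_measure_preimage_eq_zero hZ hZ_null)).symm
    _ ≤ ν univ * p := measure_prod_le_of_ae_measure_preimage_prodMk_le (hD.diff hZ) hp

end FubiniMarkov

theorem ae_eventually_notMem_of_measure_le_geometric {Ω : Type*} [MeasurableSpace Ω]
    {ℙ : Measure Ω} [IsFiniteMeasure ℙ] {A : ℕ → Set Ω} {C q : ℝ≥0∞} (hC : C ≠ ∞)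
    (hq : q < 1) (hA : ∀ᶠ n in atTop, ℙ (A n) ≤ C * q ^ n) :
    ∀ᵐ ω ∂ℙ, ∀ᶠ n in atTop, ω ∉ A n := by
  obtain ⟨N, hN⟩ := eventually_atTop.1 hA
  apply ae_eventually_notMem
  rw [← ENNReal.summable.sum_add_tsum_nat_add' (k := N)]
  refine ENNReal.add_ne_top.2 ⟨ENNReal.sum_ne_top.2 fun n _ => measure_ne_top ℙ _, ?_⟩
  have htail : ∀ n, ℙ (A (n + N)) ≤ C * q ^ n := fun n =>
    (hN (n + N) (Nat.le_add_left N n)).trans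
      (mul_le_mul_right (pow_le_pow_right_of_le_one' hq.le (Nat.le_add_right n N)) C)
  refine ne_top_of_le_ne_top ?_ (ENNReal.tsum_le_tsum htail)
  rw [ENNReal.tsum_mul_left, ENNReal.tsum_geometric]
  exact ENNReal.mul_ne_top hC (ENNReal.inv_ne_top.2 (tsub_pos_of_lt hq).ne')

theorem le_abs_log_abs_div_sub_of_abs_le_exp {x g ε L : ℝ} (hx : x ≠ 0) (hL : 0 < L)
    (h : |x| ≤ exp ((g - ε) * L)) : ε ≤ |log |x| / L - g| := by
  have hlog : log |x| / L ≤ g - ε :=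
    (div_le_iff₀ hL).2 ((log_le_iff_le_exp (abs_pos.2 hx)).2 h)
  linarith [neg_abs_le (log |x| / L - g)]

namespace Anderson

theorem continuous_HBoxE (a b : ℤ) :
    Continuous fun p : ℝ × (ℤ → ℝ) => HBoxE p.1 p.2 a b := by
  refine continuous_matrix fun i j => ?_
  simp only [HBoxE, HBox, Matrix.sub_apply, Matrix.smul_apply, Matrix.one_apply,
    Matrix.of_apply, smul_eq_mul]
  split_ifs <;> fun_prop

theorem measurable_Pdet (a b : ℤ) :
    Measurable fun p : ℝ × (ℤ → ℝ) => Pdet p.1 p.2 a b := by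
  unfold Pdet
  split_ifs
  · exact (continuous_HBoxE a b).matrix_det.measurable
  · exact measurable_const

theorem Pdet_eq_eval_charpoly {a b : ℤ} (hab : a ≤ b) (E : ℝ) (ω : ℤ → ℝ) :
    Pdet E ω a b = (-1) ^ ((b - a).toNat + 1) * (HBox ω a b).charpoly.eval E := by
  have hneg : HBoxE E ω a b = -(Matrix.scalar _ E - HBox ω a b) := by
    rw [neg_sub, HBoxE, Matrix.scalar_apply, Matrix.smul_one_eq_diagonal]
  rw [Pdet, if_pos hab, Matrix.eval_charpoly, hneg, Matrix.det_neg, Fintype.card_fin]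

theorem finite_setOf_Pdet_eq_zero (ω : ℤ → ℝ) (a b : ℤ) :
    {E : ℝ | Pdet E ω a b = 0}.Finite := by
  by_cases hab : a ≤ b
  · refine (Polynomial.finite_setOfPred_isRoot (HBox ω a b).charpoly_monic.ne_zero).subset
      fun E hE => ?_
    simpa [Pdet_eq_eval_charpoly hab] using hE
  · simp [Pdet, hab]

theorem continuous_Tmat (a b : ℤ) :
    Continuous fun p : ℝ × (ℤ → ℝ) => Tmat p.1 p.2 a b := by
  refine continuous_list_prod _ fun i _ => continuous_matrix fun x y => ?_
  fin_cases x <;> fin_cases y <;> simp only [Amat] <;> fun_prop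

theorem continuous_matNorm : Continuous matNorm := by
  unfold matNorm
  fun_prop

theorem measurable_of_tendsto_lyapunov {ℙ : Measure (ℤ → ℝ)} [SFinite ℙ] {γ : ℝ → ℝ}
    (hγ : ∀ E : ℝ, Tendsto
      (fun n : ℕ => (∫ ω, log (matNorm (Tmat E ω 0 n)) ∂ℙ) / (n + 1)) atTop (𝓝 (γ E))) :
    Measurable γ := by
  refine measurable_of_tendsto_metrizable (fun n => ?_) (tendsto_pi_nhds.2 hγ)
  have hlog : Measurable fun p : ℝ × (ℤ → ℝ) => log (matNorm (Tmat p.1 p.2 0 n)) :=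
    measurable_log.comp (continuous_matNorm.comp (continuous_Tmat 0 n)).measurable
  exact hlog.stronglyMeasurable.integral_prod_right'.measurable.div_const _

theorem measure_setOf_lt_volume_lowerDeviation_le {ℙ : Measure (ℤ → ℝ)} [SFinite ℙ]
    {γ : ℝ → ℝ} (hγ : Measurable γ) {s : Set ℝ} (hs : MeasurableSet s) {a b : ℤ}
    {ε η δ L : ℝ} (hL : 0 < L)
    (hLDT : ∀ E ∈ s, ℙ {ω | ε ≤ |log |Pdet E ω a b| / L - γ E|} ≤ .ofReal (exp (-η * L))) :
    ℙ {ω | .ofReal (exp (-(η - δ) * L)) <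
        volume ({E | |Pdet E ω a b| ≤ exp ((γ E - ε) * L)} ∩ s)}
      ≤ volume s * .ofReal (exp (-δ * L)) := by
  set D : Set (ℝ × (ℤ → ℝ)) := {p | |Pdet p.1 p.2 a b| ≤ exp ((γ p.1 - ε) * L)}
  set Z : Set (ℝ × (ℤ → ℝ)) := {p | Pdet p.1 p.2 a b = 0}
  have hD : MeasurableSet D := measurableSet_le (measurable_Pdet a b).abs (by fun_prop)
  have hZ : MeasurableSet Z := measurableSet_eq_fun (measurable_Pdet a b) measurable_const
  have hZ_null : ∀ ω, volume.restrict s ((·, ω) ⁻¹' Z) = 0 := fun ω =>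
    (finite_setOf_Pdet_eq_zero ω a b).measure_zero _
  have hp : ∀ᵐ E ∂volume.restrict s, ℙ (Prod.mk E ⁻¹' (D \ Z)) ≤ .ofReal (exp (-η * L)) :=
    (ae_restrict_iff' hs).2 <| .of_forall fun E hE =>
      (measure_mono fun ω hω => le_abs_log_abs_div_sub_of_abs_le_exp hω.2 hL hω.1).trans
        (hLDT E hE)
  have hsplit : ENNReal.ofReal (exp (-η * L))
      = .ofReal (exp (-(η - δ) * L)) * .ofReal (exp (-δ * L)) := by
    rw [← ENNReal.ofReal_mul (exp_pos _).le, ← exp_add]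
    ring_nf
  have hmarkov :=
    mul_measure_setOf_lt_measure_preimage_le hD hZ hZ_null hp (.ofReal (exp (-(η - δ) * L)))
  rw [Measure.restrict_apply_univ, hsplit, mul_left_comm,
    ENNReal.mul_le_mul_iff_right (by positivity) ENNReal.ofReal_ne_top] at hmarkov
  simp only [Measure.restrict_apply' hs] at hmarkov
  exact hmarkov

end Anderson

open Anderson in
theorem small_measure_of_lower_deviation_sets_general
    (S : Set ℝ)
    (hS_cpt : IsCompact S)
    (ℙ : Measure (ℤ → ℝ)) [IsProbabilityMeasure ℙ]
    (γ : ℝ → ℝ)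
    (hγ : ∀ E : ℝ, Tendsto
      (fun n : ℕ => (∫ ω, Real.log (matNorm (Tmat E ω 0 n)) ∂ℙ) / (n + 1)) atTop (𝓝 (γ E)))
    (ε₀ η₀ : ℝ) (N₀ : ℕ)
    (hLDT : ∀ a b : ℤ, (N₀ : ℤ) < b - a → ∀ E ∈ Set.Icc (-2 : ℝ) 2 + S,
      ℙ {ω | ε₀ ≤ |Real.log |Pdet E ω a b| / ((b : ℝ) - (a : ℝ) + 1) - γ E|}
        ≤ ENNReal.ofReal (Real.exp (-η₀ * ((b : ℝ) - (a : ℝ) + 1))))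
    (δ₀ : ℝ) (hδ₀ : 0 < δ₀) :
    ∀ᵐ ω ∂ℙ, ∃ N₁ : ℕ, ∀ n : ℕ, n > N₁ →
      volume ({E : ℝ | |Pdet E ω ((n : ℤ) + 1) (3 * n + 1)|
            ≤ Real.exp ((γ E - ε₀) * (2 * n + 1))} ∩ (Set.Icc (-2 : ℝ) 2 + S))
        ≤ ENNReal.ofReal (Real.exp (-(η₀ - δ₀) * (2 * n + 1))) ∧
      volume ({E : ℝ | |Pdet E ω (-(n : ℤ)) n|
            ≤ Real.exp ((γ E - ε₀) * (2 * n + 1))} ∩ (Set.Icc (-2 : ℝ) 2 + S))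
        ≤ ENNReal.ofReal (Real.exp (-(η₀ - δ₀) * (2 * n + 1))) := by
  set σ := Set.Icc (-2 : ℝ) 2 + S
  have hσ : IsCompact σ := isCompact_Icc.add hS_cpt
  set Bad : ℤ → ℤ → ℕ → Set (ℤ → ℝ) := fun a b n =>
    {ω | .ofReal (exp (-(η₀ - δ₀) * (2 * n + 1))) <
      volume ({E | |Pdet E ω a b| ≤ exp ((γ E - ε₀) * (2 * n + 1))} ∩ σ)}
  have hBad : ∀ a b : ℤ, ∀ n : ℕ, b - a = 2 * n → N₀ < 2 * n →
      ℙ (Bad a b n) ≤ volume σ * .ofReal (exp (-δ₀ * (2 * n + 1))) := by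
    intro a b n hba hn
    have hL : (b : ℝ) - a + 1 = 2 * n + 1 := by
      rw [← Int.cast_sub, hba]; push_cast; ring
    refine measure_setOf_lt_volume_lowerDeviation_le (measurable_of_tendsto_lyapunov hγ)
      hσ.isClosed.measurableSet (by positivity) fun E hE => ?_
    simpa only [hL] using hLDT a b (by omega) E hE
  have hsum : ∀ᶠ n : ℕ in atTop, ℙ (Bad (n + 1) (3 * n + 1) n ∪ Bad (-n) n n)
      ≤ 2 * volume σ * .ofReal (exp (-δ₀)) ^ n := by
    filter_upwards [eventually_gt_atTop N₀] with n hn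
    calc _ ≤ 2 * (volume σ * .ofReal (exp (-δ₀ * (2 * n + 1)))) :=
          (measure_union_le _ _).trans <| (add_le_add (hBad _ _ n (by ring) (by omega))
            (hBad _ _ n (by ring) (by omega))).trans_eq (two_mul _).symm
      _ ≤ 2 * volume σ * .ofReal (exp (-δ₀)) ^ n := by
          rw [mul_assoc, ← ENNReal.ofReal_pow (exp_pos _).le, ← exp_nat_mul]
          have hexp : -δ₀ * (2 * n + 1) ≤ n * -δ₀ := by
            nlinarith [(n.cast_nonneg : (0 : ℝ) ≤ n)]
          gcongr 2 * (volume σ * ?_)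
          exact ENNReal.ofReal_le_ofReal (exp_le_exp.2 hexp)
  filter_upwards [ae_eventually_notMem_of_measure_le_geometric
    (ENNReal.mul_ne_top (by simp) hσ.measure_lt_top.ne)
    (ENNReal.ofReal_lt_one.2 (exp_lt_one_iff.2 (neg_lt_zero.2 hδ₀))) hsum] with ω hω
  obtain ⟨N, hN⟩ := eventually_atTop.1 hω
  refine ⟨N, fun n hn => ?_⟩
  simpa only [Bad, Set.mem_union, Set.mem_ofPred_eq, not_or, not_lt] using hN n hn.le

open Anderson in
/-- Lemma 3.2: a.s. smallness of the Lebesgue measure of the lower large-deviation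
sets in the energy variable. -/
theorem small_measure_of_lower_deviation_sets
    (μ : Measure ℝ) [IsProbabilityMeasure μ]
    (S : Set ℝ)
    (hS_supp : ∀ x : ℝ, x ∈ S ↔ ∀ U ∈ nhds x, 0 < μ U)
    (hS_cpt : IsCompact S) (hS_two : S.Nontrivial)
    (ℙ : Measure (ℤ → ℝ)) [IsProbabilityMeasure ℙ]
    (hiid : ∀ I : Finset ℤ, ℙ.map (fun ω (i : I) => ω (i : ℤ)) = Measure.pi fun _ : I => μ)
    (γ : ℝ → ℝ)
    (hγ : ∀ E : ℝ, Tendsto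
      (fun n : ℕ => (∫ ω, Real.log (matNorm (Tmat E ω 0 n)) ∂ℙ) / (n + 1)) atTop (𝓝 (γ E)))
    (ε₀ η₀ : ℝ) (N₀ : ℕ) (hε₀ : 0 < ε₀) (hη₀ : 0 < η₀)
    (hLDT : ∀ a b : ℤ, (N₀ : ℤ) < b - a → ∀ E ∈ Set.Icc (-2 : ℝ) 2 + S,
      ℙ {ω | ε₀ ≤ |Real.log |Pdet E ω a b| / ((b : ℝ) - (a : ℝ) + 1) - γ E|}
        ≤ ENNReal.ofReal (Real.exp (-η₀ * ((b : ℝ) - (a : ℝ) + 1))))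
    (δ₀ : ℝ) (hδ₀ : 0 < δ₀) (hδ₀η : δ₀ < η₀) :
    ∀ᵐ ω ∂ℙ, ∃ N₁ : ℕ, ∀ n : ℕ, n > N₁ →
      volume ({E : ℝ | |Pdet E ω ((n : ℤ) + 1) (3 * n + 1)|
            ≤ Real.exp ((γ E - ε₀) * (2 * n + 1))} ∩ (Set.Icc (-2 : ℝ) 2 + S))
        ≤ ENNReal.ofReal (Real.exp (-(η₀ - δ₀) * (2 * n + 1))) ∧
      volume ({E : ℝ | |Pdet E ω (-(n : ℤ)) n|
            ≤ Real.exp ((γ E - ε₀) * (2 * n + 1))} ∩ (Set.Icc (-2 : ℝ) 2 + S))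
        ≤ ENNReal.ofReal (Real.exp (-(η₀ - δ₀) * (2 * n + 1))) :=
  small_measure_of_lower_deviation_sets_general S hS_cpt ℙ γ hγ ε₀ η₀ N₀ hLDT δ₀ hδ₀
end
end

section
/- Polynomial interpolation bound at shifted Chebyshev-type nodes: for every θ with 0 < θ < 1/2 there exists a constant C = C(θ) > 0 such that for every integer n ≥ 1, every polynomial Q with real coefficients of degree at most n − 1, and every a > 0, if |Q(x_i)| ≤ aⁿ for every i = 1, …, n, where x_i = cos(2π(i+θ)/n), then |Q(x)| ≤ C · n · aⁿ for all x ∈ [−1, 1]. -/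
open Real Set


lemma abs_sin_nat_mul_le (n : ℕ) (x : ℝ) : |Real.sin (n * x)| ≤ n * |Real.sin x| := by
  induction n with
  | zero => simp
  | succ k ih =>
    have : ((k:ℝ) + 1) * x = (k:ℝ) * x + x := by ring
    push_cast
    rw [this, Real.sin_add]
    have habs : |Real.sin ((k:ℝ)*x) * Real.cos x + Real.cos ((k:ℝ)*x) * Real.sin x|
        ≤ |Real.sin ((k:ℝ)*x)| * |Real.cos x| + |Real.cos ((k:ℝ)*x)| * |Real.sin x| := by
      rw [← abs_mul, ← abs_mul]; exact abs_add_le _ _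
    nlinarith [habs, ih, Real.abs_cos_le_one x, Real.abs_cos_le_one ((k:ℝ)*x),
      abs_nonneg (Real.sin x), abs_nonneg (Real.sin ((k:ℝ)*x)), abs_nonneg (Real.cos x)]

lemma sin_le_two_sin_half_add {s t : ℝ} (hs0 : 0 ≤ s) (hsπ : s ≤ π) (ht0 : 0 ≤ t)
    (htπ : t ≤ π) : Real.sin t ≤ 2 * Real.sin ((s + t) / 2) := by
  have hπ := Real.pi_pos
  have h2 : Real.sin t = 2 * Real.sin (t/2) * Real.cos (t/2) := by
    rw [← Real.sin_two_mul]; ring_nf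
  rcases le_or_gt ((s+t)/2) (π/2) with hA | hA
  · have h1 : Real.sin (t/2) ≤ Real.sin ((s+t)/2) :=
      Real.sin_le_sin_of_le_of_le_pi_div_two (by linarith) hA (by linarith)
    have hc : Real.cos (t/2) ≤ 1 := Real.cos_le_one _
    have hc0 : 0 ≤ Real.cos (t/2) := Real.cos_nonneg_of_mem_Icc ⟨by linarith, by linarith⟩
    have hs0' : 0 ≤ Real.sin (t/2) := Real.sin_nonneg_of_nonneg_of_le_pi (by linarith) (by linarith)
    nlinarith
  · have hsym : Real.sin ((s+t)/2) = Real.sin (π - (s+t)/2) := (Real.sin_pi_sub _).symm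
    have hcs : Real.cos (t/2) = Real.sin (π/2 - t/2) := (Real.sin_pi_div_two_sub _).symm
    have h1 : Real.sin (π/2 - t/2) ≤ Real.sin (π - (s+t)/2) :=
      Real.sin_le_sin_of_le_of_le_pi_div_two (by linarith) (by linarith) (by linarith)
    have hsle : Real.sin (t/2) ≤ 1 := Real.sin_le_one _
    have hs0' : 0 ≤ Real.sin (t/2) := Real.sin_nonneg_of_nonneg_of_le_pi (by linarith) (by linarith)
    have hc0 : 0 ≤ Real.cos (t/2) := Real.cos_nonneg_of_mem_Icc ⟨by linarith, by linarith⟩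
    nlinarith [hsym, hcs, h1]

lemma key_trig_core (n : ℕ) {s t : ℝ} (hs0 : 0 ≤ s) (hsπ : s ≤ π) (ht0 : 0 ≤ t) (htπ : t ≤ π) :
    |Real.cos (n * s) - Real.cos (n * t)| * |Real.sin t|
      ≤ 2 * n * |Real.cos s - Real.cos t| := by
  have hA0 : 0 ≤ (s + t) / 2 := by linarith
  have hAπ : (s + t) / 2 ≤ π := by linarith
  have hd : Real.cos s - Real.cos t = -2 * Real.sin ((s+t)/2) * Real.sin ((s-t)/2) :=
    Real.cos_sub_cos s t
  have hdn : Real.cos ((n:ℝ)*s) - Real.cos ((n:ℝ)*t)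
      = -2 * Real.sin ((n:ℝ)*((s+t)/2)) * Real.sin ((n:ℝ)*((s-t)/2)) := by
    have := Real.cos_sub_cos ((n:ℝ)*s) ((n:ℝ)*t)
    rw [this]; ring_nf
  have hsinA : 0 ≤ Real.sin ((s+t)/2) := Real.sin_nonneg_of_nonneg_of_le_pi hA0 hAπ
  have habs : |Real.cos s - Real.cos t| = 2 * Real.sin ((s+t)/2) * |Real.sin ((s-t)/2)| := by
    rw [hd, abs_mul, abs_mul]
    rw [abs_of_nonneg hsinA]
    norm_num
  have habsn : |Real.cos ((n:ℝ)*s) - Real.cos ((n:ℝ)*t)|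
      = 2 * |Real.sin ((n:ℝ)*((s+t)/2))| * |Real.sin ((n:ℝ)*((s-t)/2))| := by
    rw [hdn, abs_mul, abs_mul]
    norm_num
  rw [habs, habsn]
  have h1 : |Real.sin ((n:ℝ)*((s+t)/2))| ≤ 1 := Real.abs_sin_le_one _
  have h2 : |Real.sin ((n:ℝ)*((s-t)/2))| ≤ (n:ℝ) * |Real.sin ((s-t)/2)| := abs_sin_nat_mul_le n _
  have h3 : |Real.sin t| ≤ 2 * Real.sin ((s+t)/2) := by
    rw [abs_of_nonneg (Real.sin_nonneg_of_nonneg_of_le_pi ht0 htπ)]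
    exact sin_le_two_sin_half_add hs0 hsπ ht0 htπ
  have hb0 : 0 ≤ |Real.sin ((n:ℝ)*((s-t)/2))| := abs_nonneg _
  have hb1 : 0 ≤ |Real.sin ((s-t)/2)| := abs_nonneg _
  have ht' : 0 ≤ |Real.sin t| := abs_nonneg _
  nlinarith [mul_le_mul h2 h3 ht' (by positivity : (0:ℝ) ≤ (n:ℝ) * |Real.sin ((s-t)/2)|),
    mul_le_mul_of_nonneg_right h1 (mul_nonneg hb0 ht')]

lemma cos_nat_mul_eq_of_cos_eq (n : ℕ) {u t : ℝ} (h : Real.cos u = Real.cos t) :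
    Real.cos ((n:ℝ) * u) = Real.cos ((n:ℝ) * t) := by
  rcases Real.cos_eq_cos_iff.mp h with ⟨k, hk | hk⟩
  · rw [hk]
    have : (n:ℝ) * (2 * (k:ℝ) * π + u) = (n:ℝ)*u + ((n*k : ℤ):ℝ) * (2*π) := by push_cast; ring
    rw [this, Real.cos_add_int_mul_two_pi]
  · rw [hk]
    have : (n:ℝ) * (2 * (k:ℝ) * π - u) = -((n:ℝ)*u) + ((n*k : ℤ):ℝ) * (2*π) := by push_cast; ring
    rw [this, Real.cos_add_int_mul_two_pi, Real.cos_neg]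

lemma key_trig (n : ℕ) {s : ℝ} (hs0 : 0 ≤ s) (hsπ : s ≤ π) (t : ℝ) :
    |Real.cos (n * s) - Real.cos (n * t)| * |Real.sin t|
      ≤ 2 * n * |Real.cos s - Real.cos t| := by
  set u := Real.arccos (Real.cos t) with hu
  have hcu : Real.cos u = Real.cos t :=
    Real.cos_arccos (Real.neg_one_le_cos t) (Real.cos_le_one t)
  have hsu : |Real.sin u| = |Real.sin t| := by
    rw [hu, Real.sin_arccos, ← Real.abs_sin_eq_sqrt_one_sub_cos_sq, abs_abs]
  have hcnu : Real.cos ((n:ℝ) * u) = Real.cos ((n:ℝ) * t) := cos_nat_mul_eq_of_cos_eq n hcu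
  calc |Real.cos ((n:ℝ) * s) - Real.cos ((n:ℝ) * t)| * |Real.sin t|
      = |Real.cos ((n:ℝ) * s) - Real.cos ((n:ℝ) * u)| * |Real.sin u| := by rw [hcnu, hsu]
    _ ≤ 2 * n * |Real.cos s - Real.cos u| :=
        key_trig_core n hs0 hsπ (Real.arccos_nonneg _) (Real.arccos_le_pi _)
    _ = 2 * n * |Real.cos s - Real.cos t| := by rw [hcu]

lemma chebyshev_T_natDegree_le : ∀ n : ℕ, (Polynomial.Chebyshev.T ℝ (n:ℤ)).natDegree ≤ n := by
  intro n
  induction n using Nat.strong_induction_on with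
  | _ n ih =>
    match n with
    | 0 => simp [Polynomial.Chebyshev.T_zero]
    | 1 => simp [Polynomial.Chebyshev.T_one]
    | (m+2) =>
      have h : ((m+2 : ℕ) : ℤ) = (m : ℤ) + 2 := by push_cast; ring
      rw [h, Polynomial.Chebyshev.T_add_two]
      refine (Polynomial.natDegree_sub_le _ _).trans ?_
      have h1 : (2 * Polynomial.X * Polynomial.Chebyshev.T ℝ ((m:ℤ)+1)).natDegree ≤ m + 2 := by
        refine (Polynomial.natDegree_mul_le).trans ?_
        have h2 : (2 * Polynomial.X : Polynomial ℝ).natDegree ≤ 1 :=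
          (Polynomial.natDegree_mul_le).trans (by simp)
        have h3 : (Polynomial.Chebyshev.T ℝ ((m:ℤ)+1)).natDegree ≤ m + 1 := by
          have := ih (m+1) (by omega)
          rwa [show ((m+1:ℕ):ℤ) = (m:ℤ)+1 by push_cast; ring] at this
        omega
      have h4 : (Polynomial.Chebyshev.T ℝ (m:ℤ)).natDegree ≤ m := ih m (by omega)
      simp only [max_le_iff]
      exact ⟨h1, by omega⟩

set_option maxHeartbeats 1000000 in
/-- Lemma 5.3: polynomial interpolation bound at the shifted Chebyshev-type nodes
`x_i = cos (2π(i+θ)/n)`. -/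
theorem interpolation_bound_at_shifted_chebyshev_nodes
    (θ : ℝ) (hθ0 : 0 < θ) (hθ : θ < 1 / 2) :
    ∃ C > (0 : ℝ), ∀ n : ℕ, 1 ≤ n → ∀ Q : Polynomial ℝ, Q.natDegree ≤ n - 1 →
      ∀ a : ℝ, 0 < a →
        (∀ i : ℕ, 1 ≤ i → i ≤ n →
          |Q.eval (Real.cos (2 * π * ((i : ℝ) + θ) / n))| ≤ a ^ n) →
        ∀ x ∈ Set.Icc (-1 : ℝ) 1, |Q.eval x| ≤ C * n * a ^ n := by
  have hπ := Real.pi_pos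
  have hτpos : 0 < Real.sin (2*π*θ) :=
    Real.sin_pos_of_pos_of_lt_pi (by positivity) (by nlinarith)
  refine ⟨2 / Real.sin (2*π*θ), by positivity, ?_⟩
  intro n hn Q hdeg a ha hQ x hx
  have hn0 : (n:ℝ) ≠ 0 := by positivity
  set t : ℕ → ℝ := fun i => 2*π*((i:ℝ)+θ)/n with ht
  set v : ℕ → ℝ := fun i => Real.cos (t i) with hv
  set s : Finset ℕ := Finset.Icc 1 n with hs
  have hcard : s.card = n := by rw [hs, Nat.card_Icc]; omega
  -- integer fact: no integer equals 2θ
  have hint : ∀ m : ℤ, (m:ℝ) ≠ 2*θ := by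
    intro m hm
    have h0 : (0:ℤ) < m := by exact_mod_cast hm ▸ (by linarith : (0:ℝ) < 2*θ)
    have h1 : (1:ℝ) ≤ (m:ℝ) := by exact_mod_cast h0
    linarith
  have hts : ∀ i : ℕ, (n:ℝ) * t i = 2*π*θ + (i:ℤ) * (2*π) := by
    intro i
    rw [ht]; field_simp; push_cast; ring
  have hcosnt : ∀ i : ℕ, Real.cos ((n:ℝ) * t i) = Real.cos (2*π*θ) := by
    intro i; rw [hts i, Real.cos_add_int_mul_two_pi]
  have hsinnt : ∀ i : ℕ, Real.sin ((n:ℝ) * t i) = Real.sin (2*π*θ) := by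
    intro i; rw [hts i, Real.sin_add_int_mul_two_pi]
  have hsint : ∀ i : ℕ, Real.sin (t i) ≠ 0 := by
    intro i hzero
    obtain ⟨m, hm⟩ := Real.sin_eq_zero_iff.mp hzero
    rw [ht] at hm
    simp only at hm
    rw [eq_div_iff hn0] at hm
    have h2 : π * ((m:ℝ)*n) = π * (2*((i:ℝ)+θ)) := by linear_combination hm
    have h3 := mul_left_cancel₀ (ne_of_gt hπ) h2
    exact hint (m*n - 2*i) (by push_cast; linarith)
  have hinj : Set.InjOn v (s : Set ℕ) := by
    intro i hi j hj hij
    simp only [hs, Finset.coe_Icc, Set.mem_Icc] at hi hj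
    rw [hv] at hij
    simp only at hij
    rcases Real.cos_eq_cos_iff.mp hij with ⟨k, hk | hk⟩
    · -- t j = 2kπ + t i
      rw [ht] at hk
      simp only at hk
      rw [div_eq_iff hn0] at hk
      have h2 : π * (2*((j:ℝ)+θ)) = π * (2*(k:ℝ)*n + 2*((i:ℝ)+θ)) := by
        field_simp at hk
        linear_combination (2*π) * hk
      have h3 := mul_left_cancel₀ (ne_of_gt hπ) h2
      have h4 : (j:ℤ) = k*n + i := by exact_mod_cast (by linarith : (j:ℝ) = (k:ℝ)*n + i)
      have hi1 : (1:ℤ) ≤ i := by exact_mod_cast hi.1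
      have hi2 : (i:ℤ) ≤ n := by exact_mod_cast hi.2
      have hj1 : (1:ℤ) ≤ j := by exact_mod_cast hj.1
      have hj2 : (j:ℤ) ≤ n := by exact_mod_cast hj.2
      have hk0 : k = 0 := by
        rcases lt_trichotomy k 0 with h | h | h
        · nlinarith [mul_le_mul_of_nonneg_right (show k ≤ -1 by omega) (show (0:ℤ) ≤ n by omega)]
        · exact h
        · nlinarith [mul_le_mul_of_nonneg_right (show (1:ℤ) ≤ k by omega) (show (0:ℤ) ≤ n by omega)]
      rw [hk0, zero_mul, zero_add] at h4
      exact_mod_cast h4.symm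
    · -- t j = 2kπ - t i  →  2θ = kn - i - j, contradiction
      exfalso
      rw [ht] at hk
      simp only at hk
      rw [div_eq_iff hn0] at hk
      have h2 : π * (2*((j:ℝ)+θ) + 2*((i:ℝ)+θ)) = π * (2*(k:ℝ)*n) := by
        field_simp at hk
        linear_combination (2*π) * hk
      have h3 := mul_left_cancel₀ (ne_of_gt hπ) h2
      exact hint (k*n - i - j) (by push_cast; linarith)
  -- polynomial identity: T n - C c = C L * nodal
  set c := Real.cos (2*π*θ) with hc
  set N : Polynomial ℝ := Lagrange.nodal s v with hN
  have hNdeg : N.natDegree = n := by rw [hN, Lagrange.natDegree_nodal, hcard]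
  have hNmonic : N.Monic := Lagrange.nodal_monic
  set T := Polynomial.Chebyshev.T ℝ (n:ℤ) with hT
  set L : ℝ := (T - Polynomial.C c).coeff n with hL
  have hTdegn : (Polynomial.Chebyshev.T ℝ (n:ℤ)).natDegree ≤ n := chebyshev_T_natDegree_le n
  have hTdeg : (T - Polynomial.C c).natDegree ≤ n := by
    refine (Polynomial.natDegree_sub_le _ _).trans ?_
    simp only [max_le_iff]
    exact ⟨hTdegn, by simp [Polynomial.natDegree_C]⟩
  have himgcard : (s.image v).card = n := by
    rw [Finset.card_image_of_injOn hinj, hcard]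
  have hevalT : ∀ i ∈ s, (T - Polynomial.C c).eval (v i) = 0 := by
    intro i hi
    rw [Polynomial.eval_sub, Polynomial.eval_C, hT, hv]
    simp only
    rw [Polynomial.Chebyshev.T_real_cos]
    push_cast
    rw [hcosnt i, hc, sub_self]
  have hTN : T - Polynomial.C c = Polynomial.C L * N := by
    have hNcoeff : N.coeff n = 1 := by
      have := hNmonic.coeff_natDegree
      rwa [hNdeg] at this
    have hDcoeff : (T - Polynomial.C c - Polynomial.C L * N).coeff n = 0 := by
      rw [Polynomial.coeff_sub, Polynomial.coeff_C_mul, hNcoeff, mul_one, ← hL, sub_self]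
    have hDdeg : (T - Polynomial.C c - Polynomial.C L * N).natDegree ≤ n := by
      refine (Polynomial.natDegree_sub_le _ _).trans ?_
      simp only [max_le_iff]
      refine ⟨hTdeg, Polynomial.natDegree_mul_le.trans ?_⟩
      simp [hNdeg, Polynomial.natDegree_C]
    rw [← sub_eq_zero]
    by_contra hne
    have hlt : (T - Polynomial.C c - Polynomial.C L * N).natDegree < n := by
      rcases lt_or_eq_of_le hDdeg with h | h
      · exact h
      · exfalso
        apply hne
        have hlc : (T - Polynomial.C c - Polynomial.C L * N).leadingCoeff = 0 := by
          rw [Polynomial.leadingCoeff, h, hDcoeff]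
        exact Polynomial.leadingCoeff_eq_zero.mp hlc
    apply hne
    refine Polynomial.eq_zero_of_natDegree_lt_card_of_eval_eq_zero' _ (s.image v) ?_ ?_
    · intro y hy
      obtain ⟨i, hi, rfl⟩ := Finset.mem_image.mp hy
      have hNi : N.eval (v i) = 0 := Lagrange.eval_nodal_at_node hi
      rw [Polynomial.eval_sub, Polynomial.eval_mul, Polynomial.eval_C, hNi, mul_zero, sub_zero]
      exact hevalT i hi
    · rw [himgcard]; exact hlt
  have hL0 : L ≠ 0 := by
    intro h0
    rw [h0, map_zero, zero_mul] at hTN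
    have h1 : (T - Polynomial.C c).eval 1 = 0 := by rw [hTN]; simp
    rw [Polynomial.eval_sub, Polynomial.eval_C] at h1
    have h2 : T.eval 1 = 1 := by
      rw [hT, show (1:ℝ) = Real.cos 0 by simp]
      rw [Polynomial.Chebyshev.T_real_cos]
      simp
    have hclt : c < 1 := by
      rw [hc, show (1:ℝ) = Real.cos 0 by simp]
      exact Real.cos_lt_cos_of_nonneg_of_le_pi le_rfl (by nlinarith) (by positivity)
    rw [h2] at h1
    linarith
  have hder : Polynomial.derivative T = Polynomial.C L * Polynomial.derivative N := by
    have h := congrArg Polynomial.derivative hTN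
    rw [Polynomial.derivative_sub, Polynomial.derivative_C, sub_zero] at h
    rw [h, Polynomial.derivative_C_mul]
  set d : ℕ → ℝ := fun i => (Polynomial.derivative N).eval (v i) with hd
  have hW : ∀ i ∈ s, L * d i * Real.sin (t i) = n * Real.sin (2*π*θ) := by
    intro i hi
    have h1 : (Polynomial.derivative T).eval (v i) = L * d i := by
      rw [hder, Polynomial.eval_mul, Polynomial.eval_C, hd]
    have h2 : (Polynomial.derivative T).eval (v i)
        = (n:ℝ) * (Polynomial.Chebyshev.U ℝ ((n:ℤ)-1)).eval (v i) := by
      rw [hT, Polynomial.Chebyshev.T_derivative_eq_U, Polynomial.eval_mul,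
        Polynomial.eval_intCast]
      push_cast
      ring
    have h3 : (Polynomial.Chebyshev.U ℝ ((n:ℤ)-1)).eval (v i) * Real.sin (t i)
        = Real.sin (2*π*θ) := by
      rw [hv]
      simp only
      rw [Polynomial.Chebyshev.U_real_cos]
      rw [show (((n:ℤ)-1 : ℤ):ℝ) + 1 = (n:ℝ) by push_cast; ring]
      exact hsinnt i
    calc L * d i * Real.sin (t i) = (L * d i) * Real.sin (t i) := by ring
      _ = ((n:ℝ) * (Polynomial.Chebyshev.U ℝ ((n:ℤ)-1)).eval (v i)) * Real.sin (t i) := by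
          rw [← h1, h2]
      _ = (n:ℝ) * ((Polynomial.Chebyshev.U ℝ ((n:ℤ)-1)).eval (v i) * Real.sin (t i)) := by ring
      _ = n * Real.sin (2*π*θ) := by rw [h3]
  have hnpos : (0:ℝ) < n := by positivity
  have hd0 : ∀ i ∈ s, d i ≠ 0 := by
    intro i hi h0
    have hw := hW i hi
    rw [h0, mul_zero, zero_mul] at hw
    have : (0:ℝ) < n * Real.sin (2*π*θ) := by positivity
    linarith [hw ▸ this]
  have hbasis : ∀ i ∈ s, |(Lagrange.basis s v i).eval x| ≤ 2 / Real.sin (2*π*θ) := by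
    intro i hi
    have hsin1 : Real.sin (2*π*θ) ≤ 1 := Real.sin_le_one _
    by_cases hxi : x = v i
    · rw [hxi, Lagrange.eval_basis_self hinj hi, abs_one, le_div_iff₀ hτpos]
      linarith
    · have heval := Lagrange.eval_basis_not_at_node hi hxi
      rw [Lagrange.nodalWeight_eq_eval_derivative_nodal hi] at heval
      set sx := Real.arccos x with hsx
      have hx1 : -1 ≤ x := hx.1
      have hx2 : x ≤ 1 := hx.2
      have hcos : Real.cos sx = x := Real.cos_arccos hx1 hx2
      have hLN : L * N.eval x = Real.cos ((n:ℝ)*sx) - Real.cos ((n:ℝ)* t i) := by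
        have h := congrArg (Polynomial.eval x) hTN
        rw [Polynomial.eval_sub, Polynomial.eval_C, Polynomial.eval_mul, Polynomial.eval_C] at h
        rw [← h, hT]
        rw [show Polynomial.eval x (Polynomial.Chebyshev.T ℝ (n:ℤ))
            = Polynomial.eval (Real.cos sx) (Polynomial.Chebyshev.T ℝ (n:ℤ)) by rw [hcos]]
        rw [Polynomial.Chebyshev.T_real_cos]
        push_cast
        rw [hcosnt i, hc]
      have hEne : x - v i ≠ 0 := sub_ne_zero.mpr hxi
      have hdne : d i ≠ 0 := hd0 i hi
      have hkey : |Real.cos ((n:ℝ)*sx) - Real.cos ((n:ℝ)*(t i))| * |Real.sin (t i)|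
          ≤ 2*n*|x - v i| := by
        have h := key_trig n (Real.arccos_nonneg x) (Real.arccos_le_pi x) (t i)
        rw [← hsx, hcos] at h
        have hvi : Real.cos (t i) = v i := by rw [hv]
        rwa [hvi] at h
      have h1 : |L| * |N.eval x| * |Real.sin (t i)| ≤ 2*n*|x - v i| := by
        calc |L| * |N.eval x| * |Real.sin (t i)|
            = |L * N.eval x| * |Real.sin (t i)| := by rw [abs_mul]
          _ = |Real.cos ((n:ℝ)*sx) - Real.cos ((n:ℝ)*(t i))| * |Real.sin (t i)| := by rw [hLN]
          _ ≤ 2*n*|x - v i| := hkey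
      have h2 : |L| * |d i| * |Real.sin (t i)| = n * Real.sin (2*π*θ) := by
        rw [← abs_mul, ← abs_mul, hW i hi, abs_of_pos (by positivity)]
      rw [heval]
      have hdpos : 0 < |d i| := abs_pos.mpr hdne
      have hEpos : 0 < |x - v i| := abs_pos.mpr hEne
      have hLpos : 0 < |L| := abs_pos.mpr hL0
      have hstpos : 0 < |Real.sin (t i)| := abs_pos.mpr (hsint i)
      have hfin : |N.eval x| * Real.sin (2*π*θ) ≤ 2 * (|d i| * |x - v i|) := by
        have hcanc : (|L| * |Real.sin (t i)|) * (|N.eval x| * Real.sin (2*π*θ))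
            ≤ (|L| * |Real.sin (t i)|) * (2 * (|d i| * |x - v i|)) := by
          calc (|L| * |Real.sin (t i)|) * (|N.eval x| * Real.sin (2*π*θ))
              = (|L| * |N.eval x| * |Real.sin (t i)|) * Real.sin (2*π*θ) := by ring
            _ ≤ (2*n*|x - v i|) * Real.sin (2*π*θ) :=
                mul_le_mul_of_nonneg_right h1 hτpos.le
            _ = 2 * |x - v i| * ((n:ℝ) * Real.sin (2*π*θ)) := by ring
            _ = 2 * |x - v i| * (|L| * |d i| * |Real.sin (t i)|) := by rw [h2]
            _ = (|L| * |Real.sin (t i)|) * (2 * (|d i| * |x - v i|)) := by ring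
        exact le_of_mul_le_mul_left hcanc (by positivity : (0:ℝ) < |L| * |Real.sin (t i)|)
      calc |Polynomial.eval x N * ((Polynomial.eval (v i) (Polynomial.derivative N))⁻¹
              * (x - v i)⁻¹)|
          = |N.eval x| * (|d i|⁻¹ * |x - v i|⁻¹) := by
            rw [abs_mul, abs_mul, abs_inv, abs_inv]
        _ = (|N.eval x| * Real.sin (2*π*θ)) / (|d i| * |x - v i|) / Real.sin (2*π*θ) := by
            field_simp
        _ ≤ (2 * (|d i| * |x - v i|)) / (|d i| * |x - v i|) / Real.sin (2*π*θ) := by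
            gcongr
        _ = 2 / Real.sin (2*π*θ) := by
            rw [mul_div_assoc, div_self (by positivity : |d i| * |x - v i| ≠ 0), mul_one]
  -- final assembly
  have hdegQ : Q.degree < (s.card : WithBot ℕ) := by
    rw [hcard]
    refine lt_of_le_of_lt Polynomial.degree_le_natDegree ?_
    exact_mod_cast (show Q.natDegree < n by omega)
  have hQint := Lagrange.eq_interpolate hinj hdegQ
  have hEvalSum : Q.eval x = ∑ i ∈ s, Q.eval (v i) * (Lagrange.basis s v i).eval x := by
    conv_lhs => rw [hQint]
    rw [Lagrange.interpolate_apply, Polynomial.eval_finset_sum]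
    refine Finset.sum_congr rfl fun i hi => ?_
    rw [Polynomial.eval_mul, Polynomial.eval_C]
  rw [hEvalSum]
  calc |∑ i ∈ s, Q.eval (v i) * (Lagrange.basis s v i).eval x|
      ≤ ∑ i ∈ s, |Q.eval (v i) * (Lagrange.basis s v i).eval x| :=
        Finset.abs_sum_le_sum_abs _ _
    _ ≤ ∑ _i ∈ s, a^n * (2 / Real.sin (2*π*θ)) := by
        refine Finset.sum_le_sum fun i hi => ?_
        rw [abs_mul]
        have hmem := Finset.mem_Icc.mp (by rwa [← hs])
        have h1 : |Q.eval (v i)| ≤ a^n := by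
          have := hQ i hmem.1 hmem.2
          rw [hv, ht]
          exact this
        exact mul_le_mul h1 (hbasis i hi) (abs_nonneg _) (by positivity)
    _ = n * (a^n * (2 / Real.sin (2*π*θ))) := by
        rw [Finset.sum_const, hcard, nsmul_eq_mul]
    _ = 2 / Real.sin (2*π*θ) * n * a^n := by ring
end
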